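/- Let Φ : X → ℝ on a normed space X satisfy: there are constants c ≥ 0 and b̃ > 0 and a seminorm |·|₂ on X such that 4Φ(u) − ⟨Φ'(u), u⟩ ≥ ‖u‖² − b̃|u|₂² for all u. If (uₙ) satisfies |Φ(uₙ)| ≤ c and ‖Φ'(uₙ)‖_* ≤ 1 for all n, then ‖uₙ‖² ≤ 4c + ‖uₙ‖ + b̃|uₙ|₂². Consequently, setting vₙ = uₙ/‖uₙ‖ and assuming ‖uₙ‖ → ∞ and |vₙ|₂ → |v|₂, one obtains b̃|v|₂² ≥ 1, so v ≠ 0. -/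
import Mathlib


open Filter

/-- boundedness dichotomy in the Palais–Smale analysis: from
`4Φ(u) − ⟨Φ'(u),u⟩ ≥ ‖u‖² − b̃|u|₂²`, `|Φ(uₙ)| ≤ c`, `‖Φ'(uₙ)‖ ≤ 1` one gets
`‖uₙ‖² ≤ 4c + ‖uₙ‖ + b̃|uₙ|₂²`; if moreover `‖uₙ‖ → ∞` and
`|vₙ|₂ → L` for `vₙ = uₙ/‖uₙ‖`, then `b̃ L² ≥ 1`, so `L ≠ 0`. -/
theorem stmt_17 (X : Type*) [NormedAddCommGroup X] [NormedSpace ℝ X]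
    (Φ : X → ℝ) (Φ' : X → X →L[ℝ] ℝ)
    (q : Seminorm ℝ X)
    (c b : ℝ) (hc : 0 ≤ c) (hb : 0 < b)
    (hkey : ∀ u : X, 4 * Φ u - Φ' u u ≥ ‖u‖ ^ 2 - b * (q u) ^ 2)
    (u : ℕ → X)
    (hΦ : ∀ n, |Φ (u n)| ≤ c)
    (hΦ' : ∀ n, ‖Φ' (u n)‖ ≤ 1) :
    (∀ n, ‖u n‖ ^ 2 ≤ 4 * c + ‖u n‖ + b * (q (u n)) ^ 2) ∧
    (∀ (L : ℝ), Tendsto (fun n => ‖u n‖) atTop atTop →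
      Tendsto (fun n => q (‖u n‖⁻¹ • u n)) atTop (nhds L) →
      1 ≤ b * L ^ 2 ∧ L ≠ 0) := by

  have h1 : ∀ n, ‖u n‖ ^ 2 ≤ 4 * c + ‖u n‖ + b * (q (u n)) ^ 2 := by
    intro n
    have hk := hkey (u n)
    have hop := (Φ' (u n)).le_opNorm (u n)
    have habs : |Φ' (u n) (u n)| ≤ ‖u n‖ := by
      calc |Φ' (u n) (u n)| = ‖Φ' (u n) (u n)‖ := (Real.norm_eq_abs _).symm
        _ ≤ ‖Φ' (u n)‖ * ‖u n‖ := hop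
        _ ≤ 1 * ‖u n‖ := by
            exact mul_le_mul_of_nonneg_right (hΦ' n) (norm_nonneg _)
        _ = ‖u n‖ := one_mul _
    have hΦn := abs_le.mp (hΦ n)
    have habs' := abs_le.mp habs
    linarith [habs'.1, hΦn.2]
  refine ⟨h1, ?_⟩
  intro L hnorm hq
  have hinv : Tendsto (fun n => ‖u n‖⁻¹) atTop (nhds 0) :=
    hnorm.inv_tendsto_atTop
  have htend : Tendsto
      (fun n => 4*c*(‖u n‖⁻¹)^2 + ‖u n‖⁻¹ + b * (q (‖u n‖⁻¹ • u n))^2)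
      atTop (nhds (4*c*0^2 + 0 + b*L^2)) :=
    ((tendsto_const_nhds.mul (hinv.pow 2)).add hinv).add
      (tendsto_const_nhds.mul (hq.pow 2))
  have hpos : ∀ᶠ n in atTop, 0 < ‖u n‖ := hnorm.eventually_gt_atTop 0
  have hge : ∀ᶠ n in atTop,
      1 ≤ 4*c*(‖u n‖⁻¹)^2 + ‖u n‖⁻¹ + b * (q (‖u n‖⁻¹ • u n))^2 := by
    filter_upwards [hpos] with n hn
    have hqv : q (‖u n‖⁻¹ • u n) = ‖u n‖⁻¹ * q (u n) := by
      rw [map_smul_eq_mul]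
      simp [abs_of_nonneg (le_of_lt (inv_pos.mpr hn))]
    rw [hqv]
    have hle := h1 n
    have hn2 : (‖u n‖⁻¹) * ‖u n‖ = 1 := inv_mul_cancel₀ hn.ne'
    have h3 : ‖u n‖⁻¹ ^ 2 * ‖u n‖ ^ 2 = 1 := by
      rw [← mul_pow, hn2]; norm_num
    have h4 : ‖u n‖⁻¹ ^ 2 * ‖u n‖ = ‖u n‖⁻¹ := by
      rw [sq, mul_assoc, hn2, mul_one]
    nlinarith [mul_le_mul_of_nonneg_left hle (sq_nonneg (‖u n‖⁻¹))]
  have hfin : 1 ≤ 4*c*0^2 + 0 + b*L^2 := ge_of_tendsto htend hge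
  have hbl : 1 ≤ b * L ^ 2 := by linarith
  refine ⟨hbl, fun hL => ?_⟩
  rw [hL] at hbl
  simp at hbl
  linarith
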